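/- arXiv:2207.02052 — 4 statements merged into one kernel-verified Lean document; each statement's English description precedes it below -/
import Mathlib

section
/- Let Q : ℕ → ℝ satisfy Q(t+1) = max(Q(t) + X(t) − ε, 0) for all integers t with s ≤ t < s + T, where Q(s) ≥ 0, each X(t) ∈ {0,1}, and 0 ≤ ε ≤ 1. Then ∑_{t=s}^{s+T−1} Q(t)·(X(t) − ε) ≤ ∑_{t=s}^{s+T−1} Q(s)·(X(t) − ε) + ∑_{t=s}^{s+T−1} (t − s)·((1 − ε)·X(t) + ε²). -/
/-- Deterministic relaxation approximating future queue lengths by the frame-initial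
value (equation (39) of the paper, the core of Lemma 2). -/
theorem stmt_3 (Q X : ℕ → ℝ) (ε : ℝ) (s T : ℕ)
    (hrec : ∀ t, s ≤ t → t < s + T → Q (t + 1) = max (Q t + X t - ε) 0)
    (hQs : 0 ≤ Q s)
    (hX : ∀ t, X t = 0 ∨ X t = 1)
    (hε0 : 0 ≤ ε) (hε1 : ε ≤ 1) :
    ∑ t ∈ Finset.Ico s (s + T), Q t * (X t - ε) ≤
      (∑ t ∈ Finset.Ico s (s + T), Q s * (X t - ε))
        + ∑ t ∈ Finset.Ico s (s + T), ((t - s : ℕ) : ℝ) * ((1 - ε) * X t + ε ^ 2) := by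
  have key : ∀ n : ℕ, n ≤ T →
      Q (s + n) ≤ Q s + n * (1 - ε) ∧ Q s - n * ε ≤ Q (s + n) := by
    intro n hn
    induction n with
    | zero => simp
    | succ k ih =>
      obtain ⟨hup, hlo⟩ := ih (by omega)
      have hx0 : (0:ℝ) ≤ X (s + k) := by rcases hX (s + k) with h | h <;> simp [h]
      have hx1 : X (s + k) ≤ 1 := by rcases hX (s + k) with h | h <;> simp [h]
      have hr := hrec (s + k) (by omega) (by omega)
      have : s + (k + 1) = (s + k) + 1 := by omega
      rw [this, hr]
      push_cast
      constructor
      · apply max_le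
        · nlinarith
        · nlinarith [Nat.cast_nonneg (α := ℝ) k]
      · calc Q s - (k + 1 : ℝ) * ε ≤ Q (s + k) + X (s + k) - ε := by nlinarith
          _ ≤ max (Q (s + k) + X (s + k) - ε) 0 := le_max_left _ _
  rw [← Finset.sum_add_distrib]
  apply Finset.sum_le_sum
  intro t ht
  rw [Finset.mem_Ico] at ht
  obtain ⟨h1, h2⟩ := ht
  obtain ⟨n, rfl⟩ : ∃ n, t = s + n := ⟨t - s, by omega⟩
  obtain ⟨hup, hlo⟩ := key n (by omega)
  have hc : ((s + n - s : ℕ) : ℝ) = (n : ℝ) := by norm_cast; omega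
  rw [hc]
  have hn0 : (0:ℝ) ≤ (n:ℝ) := Nat.cast_nonneg n
  rcases hX (s + n) with h | h <;> rw [h] <;> nlinarith
end

section
/- Let L, W, σ, h, V, Q, P̄ > 0, ξ ≥ 0, f > 0 and τ_d > ξ/f. Define, for p > 0, D(p) = L/(W·log₂(1 + p·h/σ)) + ξ/f and E(p) = L·p/(W·log₂(1 + p·h/σ)), and define the per-slot cost g(p) = V·E(p) if D(p) ≤ τ_d and g(p) = Q if D(p) > τ_d, with g(0) = Q. Let p_min = (σ/h)·(2^{L/(W·(τ_d − ξ/f))} − 1) and p_max = min(Q/(V·(τ_d − ξ/f)), P̄). Then the point p* = p_min if p_min ≤ p_max, and p* = 0 otherwise, is a global minimizer of g over the interval [0, P̄], i.e., g(p*) ≤ g(p) for every p ∈ [0, P̄]. -/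
/-!
Write `T = τ_d - ξ/f`. Since the rate `W log₂(1 + p h/σ)` is increasing, the deadline
`D p ≤ τ_d` holds exactly when `p ≥ p_min`, so the cost is `Q` below `p_min` and `V E(p)`
above it. Concavity of `log` makes `log(1 + x)/x` decreasing, hence `E(p) = L / (rate p / p)`
is nondecreasing, and the cheapest feasible power is `p_min`, with energy `p_min T`. Thus
`p_min` is optimal when it is admissible (`p_min ≤ P̄`) and cheaper than dropping
(`V p_min T ≤ Q`), which is `p_min ≤ p_max`; otherwise dropping the task is.
-/

open Real Set

theorem log_one_add_div_self_antitoneOn : AntitoneOn (fun x : ℝ => log (1 + x) / x) (Ioi 0) := by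
  intro x hx y hy hxy
  have hx' : 1 + x ∈ Ioi (0 : ℝ) := by simp only [mem_Ioi] at hx ⊢; linarith
  have hy' : 1 + y ∈ Ioi (0 : ℝ) := by simp only [mem_Ioi] at hy ⊢; linarith
  have key := strictConcaveOn_log_Ioi.concaveOn.neg.secant_mono (mem_Ioi.2 one_pos) hx' hy'
    (by simpa using hx.ne') (by simpa using hy.ne') (by linarith)
  simpa [neg_div] using key

theorem isMinOn_threshold {c e : ℝ → ℝ} {s Q P : ℝ} (hs : 0 < s) (hc0 : c 0 = Q)
    (hc : ∀ p, 0 < p → c p = if s ≤ p then e p else Q) (he : ∀ p, s ≤ p → e s ≤ e p) :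
    IsMinOn c (Icc 0 P) (if e s ≤ Q ∧ s ≤ P then s else 0) := by
  have hcs : c s = e s := by simp [hc s hs]
  have hcases : ∀ p, 0 ≤ p → c p = Q ∨ s ≤ p ∧ c p = e p := by
    intro p hp0
    rcases hp0.eq_or_lt with rfl | hp
    · exact .inl hc0
    rw [hc p hp]
    split_ifs with hsp
    exacts [.inr ⟨hsp, rfl⟩, .inl rfl]
  rw [isMinOn_iff]
  rintro p ⟨hp0, hpP⟩
  split_ifs with h
  · rcases hcases p hp0 with hQ | ⟨hsp, hce⟩
    · exact hcs ▸ hQ ▸ h.1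
    · exact hcs ▸ hce ▸ he p hsp
  · rcases hcases p hp0 with hQ | ⟨hsp, hce⟩
    · exact hc0.trans hQ.symm |>.le
    · have hQ : Q < e s := lt_of_not_ge fun hQ => h ⟨hQ, hsp.trans hpP⟩
      exact hc0 ▸ hce ▸ hQ.le.trans (he p hsp)

namespace Offloading

noncomputable def rate (W h σ p : ℝ) : ℝ := W * logb 2 (1 + p * h / σ)

noncomputable def thresholdPower (L W h σ T : ℝ) : ℝ := σ / h * ((2 : ℝ) ^ (L / (W * T)) - 1)

variable {L W h σ T p : ℝ}

theorem rate_pos (hW : 0 < W) (hh : 0 < h) (hσ : 0 < σ) (hp : 0 < p) : 0 < rate W h σ p :=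
  mul_pos hW (logb_pos one_lt_two (lt_add_of_pos_right 1 (by positivity)))

theorem rate_thresholdPower (hW : W ≠ 0) (hh : h ≠ 0) (hσ : σ ≠ 0) :
    rate W h σ (thresholdPower L W h σ T) = L / T := by
  have h2 : 1 + thresholdPower L W h σ T * h / σ = (2 : ℝ) ^ (L / (W * T)) := by
    rw [thresholdPower]; field_simp; ring
  rw [rate, h2, logb_rpow two_pos (by norm_num)]
  field_simp

theorem thresholdPower_pos (hL : 0 < L) (hW : 0 < W) (hh : 0 < h) (hσ : 0 < σ) (hT : 0 < T) :
    0 < thresholdPower L W h σ T :=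
  mul_pos (div_pos hσ hh) (sub_pos.2 (one_lt_rpow one_lt_two (by positivity)))

theorem div_rate_le_iff (hW : 0 < W) (hh : 0 < h) (hσ : 0 < σ) (hT : 0 < T) (hp : 0 < p) :
    L / rate W h σ p ≤ T ↔ thresholdPower L W h σ T ≤ p := by
  have hlog : 0 < 1 + p * h / σ := by positivity
  calc L / rate W h σ p ≤ T ↔ L / (W * T) ≤ logb 2 (1 + p * h / σ) := by
        rw [div_le_iff₀ (rate_pos hW hh hσ hp), div_le_iff₀ (by positivity), rate]
        ring_nf
    _ ↔ (2 : ℝ) ^ (L / (W * T)) ≤ 1 + p * h / σ := le_logb_iff_rpow_le one_lt_two hlog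
    _ ↔ thresholdPower L W h σ T ≤ p := by
        rw [thresholdPower, ← sub_le_iff_le_add', div_mul_eq_mul_div, div_le_iff₀ hh,
          le_div_iff₀ hσ, mul_comm σ]

theorem rate_div_self_antitoneOn (hW : 0 ≤ W) (hh : 0 < h) (hσ : 0 < σ) :
    AntitoneOn (fun p => rate W h σ p / p) (Ioi 0) := by
  intro p hp q hq hpq
  have hk : 0 < h / σ := div_pos hh hσ
  have key := log_one_add_div_self_antitoneOn (mul_pos hp hk) (mul_pos hq hk)
    (mul_le_mul_of_nonneg_right hpq hk.le)
  have hform : ∀ x : ℝ, 0 < x →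
      rate W h σ x / x = W * (h / σ) / log 2 * (log (1 + x * (h / σ)) / (x * (h / σ))) := by
    intro x hx
    rw [rate, logb, mul_div_assoc]
    field_simp
  simp only [hform q hq, hform p hp]
  gcongr

theorem mul_div_rate_monotoneOn (hL : 0 ≤ L) (hW : 0 < W) (hh : 0 < h) (hσ : 0 < σ) :
    MonotoneOn (fun p => L * p / rate W h σ p) (Ioi 0) := by
  intro p hp q hq hpq
  show L * p / rate W h σ p ≤ L * q / rate W h σ q
  rw [← div_div_eq_mul_div, ← div_div_eq_mul_div]
  exact div_le_div_of_nonneg_left hL (div_pos (rate_pos hW hh hσ hq) hq)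
    (rate_div_self_antitoneOn hW.le hh hσ hp hq hpq)

theorem mul_div_rate_thresholdPower (hL : L ≠ 0) (hW : W ≠ 0) (hh : h ≠ 0) (hσ : σ ≠ 0)
    (hT : T ≠ 0) :
    L * thresholdPower L W h σ T / rate W h σ (thresholdPower L W h σ T) =
      thresholdPower L W h σ T * T := by
  rw [rate_thresholdPower hW hh hσ]
  field_simp

end Offloading

theorem stmt_4_general (L W σ V Q Pbar ξ f τd hgain : ℝ)
    (hL : 0 < L) (hW : 0 < W) (hσ : 0 < σ) (hh : 0 < hgain) (hV : 0 < V)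
    (hτ : ξ / f < τd)
    (D E g : ℝ → ℝ)
    (hD : ∀ p, 0 < p → D p = L / (W * Real.logb 2 (1 + p * hgain / σ)) + ξ / f)
    (hE : ∀ p, 0 < p → E p = L * p / (W * Real.logb 2 (1 + p * hgain / σ)))
    (hg : ∀ p, 0 < p → g p = if D p ≤ τd then V * E p else Q)
    (hg0 : g 0 = Q)
    (pmin pmax pstar : ℝ)
    (hpmin : pmin = σ / hgain * ((2 : ℝ) ^ (L / (W * (τd - ξ / f))) - 1))
    (hpmax : pmax = min (Q / (V * (τd - ξ / f))) Pbar)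
    (hpstar : pstar = if pmin ≤ pmax then pmin else 0) :
    ∀ p ∈ Set.Icc (0 : ℝ) Pbar, g pstar ≤ g p := by
  set T := τd - ξ / f
  have hT : 0 < T := sub_pos.2 hτ
  replace hpmin : pmin = Offloading.thresholdPower L W hgain σ T := hpmin
  have hpmin_pos : 0 < pmin := hpmin ▸ Offloading.thresholdPower_pos hL hW hh hσ hT
  have hfeasible (p : ℝ) (hp : 0 < p) : D p ≤ τd ↔ pmin ≤ p := by
    rw [hD p hp, ← le_sub_iff_add_le, hpmin]
    exact Offloading.div_rate_le_iff hW hh hσ hT hp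
  have hE_mono (p : ℝ) (hp : pmin ≤ p) : V * E pmin ≤ V * E p := by
    have hp0 := hpmin_pos.trans_le hp
    rw [hE pmin hpmin_pos, hE p hp0]
    exact mul_le_mul_of_nonneg_left
      (Offloading.mul_div_rate_monotoneOn hL.le hW hh hσ hpmin_pos hp0 hp) hV.le
  have hE_pmin : E pmin = pmin * T := by
    rw [hE pmin hpmin_pos, hpmin]
    exact Offloading.mul_div_rate_thresholdPower hL.ne' hW.ne' hh.ne' hσ.ne' hT.ne'
  have hcond : pmin ≤ pmax ↔ V * E pmin ≤ Q ∧ pmin ≤ Pbar := by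
    rw [hpmax, le_min_iff, le_div_iff₀ (mul_pos hV hT), hE_pmin, mul_left_comm]
  have hmin := isMinOn_threshold (P := Pbar) hpmin_pos hg0
    (fun p hp => by rw [hg p hp, if_congr (hfeasible p hp) rfl rfl]) hE_mono
  rwa [isMinOn_iff, ← if_congr hcond rfl rfl, ← hpstar] at hmin

/-- Proposition 1 of the paper: the threshold power strategy is a global minimizer
of the per-slot cost over `[0, P̄]`. -/
theorem stmt_4 (L W σ V Q Pbar ξ f τd hgain : ℝ)
    (hL : 0 < L) (hW : 0 < W) (hσ : 0 < σ) (hh : 0 < hgain) (hV : 0 < V)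
    (hQ : 0 < Q) (hP : 0 < Pbar) (hξ : 0 ≤ ξ) (hf : 0 < f) (hτ : ξ / f < τd)
    (D E g : ℝ → ℝ)
    (hD : ∀ p, 0 < p → D p = L / (W * Real.logb 2 (1 + p * hgain / σ)) + ξ / f)
    (hE : ∀ p, 0 < p → E p = L * p / (W * Real.logb 2 (1 + p * hgain / σ)))
    (hg : ∀ p, 0 < p → g p = if D p ≤ τd then V * E p else Q)
    (hg0 : g 0 = Q)
    (pmin pmax pstar : ℝ)
    (hpmin : pmin = σ / hgain * ((2 : ℝ) ^ (L / (W * (τd - ξ / f))) - 1))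
    (hpmax : pmax = min (Q / (V * (τd - ξ / f))) Pbar)
    (hpstar : pstar = if pmin ≤ pmax then pmin else 0) :
    ∀ p ∈ Set.Icc (0 : ℝ) Pbar, g pstar ≤ g p :=
  stmt_4_general L W σ V Q Pbar ξ f τd hgain hL hW hσ hh hV hτ D E g hD hE hg hg0 pmin pmax pstar
    hpmin hpmax hpstar
end

section
/- Let Q > 0 and 0 < α < 1, and define Y(ν) = Q·(1 + ν·E1(ν) − e^{−ν}) for ν > 0, where E1 is the exponential integral. If ν', ν_old > 0 satisfy ν_old > max( ν' + ln(1/(1−α)), 2·ν' ), then (1−α)·Y(ν') + α·Q < Y(ν_old). -/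
open MeasureTheory Set Real

/-- The exponential integral `E1(x) = ∫_x^∞ e^{−t}/t dt`. -/
noncomputable def expIntE1 (x : ℝ) : ℝ := ∫ t in Set.Ioi x, Real.exp (-t) / t

noncomputable def vAux (ν : ℝ) : ℝ := ∫ s in Set.Ioi (0:ℝ), Real.exp (-s) * s / (s + ν)

lemma intOn_exp (a : ℝ) : IntegrableOn (fun t : ℝ => Real.exp (-t)) (Ioi a) := by
  simpa using exp_neg_integrableOn_Ioi a one_pos

lemma intOn_E1 {ν : ℝ} (hν : 0 < ν) :
    IntegrableOn (fun t : ℝ => Real.exp (-t) / t) (Ioi ν) := by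
  refine Integrable.mono ((intOn_exp ν).const_mul (1/ν)) ?_ ?_
  · refine (ContinuousOn.aestronglyMeasurable ?_ measurableSet_Ioi)
    exact ContinuousOn.div (Continuous.continuousOn (by continuity)) continuousOn_id
      (fun t ht => ne_of_gt (lt_trans hν ht))
  · filter_upwards [ae_restrict_mem measurableSet_Ioi] with t ht
    have h0 : 0 < t := lt_trans hν ht
    rw [Real.norm_eq_abs, Real.norm_eq_abs, abs_of_nonneg (by positivity),
      abs_of_nonneg (by positivity)]
    rw [div_le_iff₀ h0]
    calc Real.exp (-t) = (1/ν * Real.exp (-t)) * ν := by field_simp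
      _ ≤ (1/ν * Real.exp (-t)) * t := by
          apply mul_le_mul_of_nonneg_left (le_of_lt ht) (by positivity)

lemma intOn_vAux {ν : ℝ} (hν : 0 < ν) :
    IntegrableOn (fun s : ℝ => Real.exp (-s) * s / (s + ν)) (Ioi 0) := by
  refine Integrable.mono (intOn_exp 0) ?_ ?_
  · refine (ContinuousOn.aestronglyMeasurable ?_ measurableSet_Ioi)
    refine ContinuousOn.div (Continuous.continuousOn (by continuity))
      (Continuous.continuousOn (by continuity)) (fun s hs => by have h0 : (0:ℝ) < s := hs; positivity)
  · filter_upwards [ae_restrict_mem measurableSet_Ioi] with s hs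
    have h0 : (0:ℝ) < s := hs
    rw [Real.norm_eq_abs, Real.norm_eq_abs, abs_of_nonneg (by positivity),
      abs_of_nonneg (Real.exp_nonneg _)]
    rw [div_le_iff₀ (by positivity)]
    nlinarith [Real.exp_pos (-s)]

lemma hrepr {ν : ℝ} (hν : 0 < ν) :
    Real.exp (-ν) - ν * expIntE1 ν = Real.exp (-ν) * vAux ν := by
  have step1 : Real.exp (-ν) - ν * expIntE1 ν
      = ∫ t in Ioi ν, (Real.exp (-t) - ν * (Real.exp (-t) / t)) := by
    rw [integral_sub (intOn_exp ν) ((intOn_E1 hν).const_mul ν),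
      integral_exp_neg_Ioi, integral_const_mul]
    rfl
  have step2 : (∫ t in Ioi ν, (Real.exp (-t) - ν * (Real.exp (-t) / t)))
      = ∫ t in Ioi ν, Real.exp (-t) * (t - ν) / t := by
    apply setIntegral_congr_fun measurableSet_Ioi
    intro t ht
    have h0 : t ≠ 0 := ne_of_gt (lt_trans hν ht)
    field_simp
  have step3 : (∫ t in Ioi ν, Real.exp (-t) * (t - ν) / t)
      = ∫ s in Ioi (0:ℝ), Real.exp (-(s + ν)) * s / (s + ν) := by
    rw [← (measurePreserving_add_right volume ν).setIntegral_preimage_emb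
      (measurableEmbedding_addRight ν) (fun t => Real.exp (-t) * (t - ν) / t) (Ioi ν)]
    simp [preimage_add_const_Ioi]
  have step4 : (∫ s in Ioi (0:ℝ), Real.exp (-(s + ν)) * s / (s + ν))
      = Real.exp (-ν) * vAux ν := by
    rw [vAux, ← integral_const_mul]
    apply setIntegral_congr_fun measurableSet_Ioi
    intro s hs
    simp only [neg_add, Real.exp_add]
    ring
  rw [step1, step2, step3, step4]

lemma vAux_mono {a b : ℝ} (ha : 0 < a) (hab : a ≤ b) : vAux b ≤ vAux a := by
  apply setIntegral_mono_on (intOn_vAux (lt_of_lt_of_le ha hab)) (intOn_vAux ha)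
    measurableSet_Ioi
  intro s hs
  have h0 : (0:ℝ) < s := hs
  gcongr
  all_goals first | positivity | linarith

lemma vAux_pos {ν : ℝ} (hν : 0 < ν) : 0 < vAux ν := by
  have hnn : 0 ≤ᵐ[volume.restrict (Ioi (0:ℝ))] fun s => Real.exp (-s) * s / (s + ν) := by
    filter_upwards [ae_restrict_mem measurableSet_Ioi] with s hs
    have h0 : (0:ℝ) < s := hs
    positivity
  rw [vAux, setIntegral_pos_iff_support_of_nonneg_ae hnn (intOn_vAux hν)]
  have hsub : Ioo (0:ℝ) 1 ⊆ (Function.support fun s => Real.exp (-s) * s / (s + ν)) ∩ Ioi 0 := by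
    intro s hs
    obtain ⟨hs0, _⟩ := hs
    refine ⟨?_, hs0⟩
    simp only [Function.mem_support]
    positivity
  refine lt_of_lt_of_le ?_ (measure_mono hsub)
  rw [Real.volume_Ioo]
  norm_num

/-- Proposition 4(c) of the paper: sufficient condition for the migration
criterion under heterogeneous computation rates. -/
theorem stmt_12 (Q α : ℝ) (hQ : 0 < Q) (hα0 : 0 < α) (hα1 : α < 1)
    (Y : ℝ → ℝ)
    (hY : ∀ ν : ℝ, 0 < ν → Y ν = Q * (1 + ν * expIntE1 ν - Real.exp (-ν)))
    (ν' νold : ℝ) (hν' : 0 < ν') (hνold : 0 < νold)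
    (hcond : νold > max (ν' + Real.log (1 / (1 - α))) (2 * ν')) :
    (1 - α) * Y ν' + α * Q < Y νold := by
  have h1α : (0:ℝ) < 1 - α := by linarith
  have hlt : ν' + Real.log (1 / (1 - α)) < νold := lt_of_le_of_lt (le_max_left _ _) hcond
  have hle : ν' ≤ νold := by
    have := lt_of_le_of_lt (le_max_right _ _) hcond
    linarith
  have hexp : Real.exp (-νold) < (1 - α) * Real.exp (-ν') := by
    have : Real.exp (-νold) < Real.exp (Real.log (1 - α) + (-ν')) := by
      apply Real.exp_lt_exp.2
      rw [Real.log_div one_ne_zero (ne_of_gt h1α), Real.log_one] at hlt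
      linarith
    rwa [Real.exp_add, Real.exp_log h1α] at this
  have key : Real.exp (-νold) - νold * expIntE1 νold
      < (1 - α) * (Real.exp (-ν') - ν' * expIntE1 ν') := by
    rw [hrepr hνold, hrepr hν']
    calc Real.exp (-νold) * vAux νold ≤ Real.exp (-νold) * vAux ν' :=
          mul_le_mul_of_nonneg_left (vAux_mono hν' hle) (Real.exp_nonneg _)
      _ < ((1 - α) * Real.exp (-ν')) * vAux ν' :=
          mul_lt_mul_of_pos_right hexp (vAux_pos hν')
      _ = (1 - α) * (Real.exp (-ν') * vAux ν') := by ring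
  rw [hY ν' hν', hY νold hνold]
  nlinarith [key, hQ]
end

section
/- Let L, W, σ, h, V, Q, P̄ > 0, ξ ≥ 0, f > 0 and τ_d > ξ/f. Define, for p > 0, D(p) = L/(W·log₂(1 + p·h/σ)) + ξ/f and E(p) = L·p/(W·log₂(1 + p·h/σ)), and the per-slot cost g(p) = V·E(p) if D(p) ≤ τ_d and g(p) = Q if D(p) > τ_d, with g(0) = Q. Let p_min = (σ/h)·(2^{L/(W·(τ_d − ξ/f))} − 1) and e = σ·(τ_d − ξ/f)·(2^{L/(W·(τ_d − ξ/f))} − 1). Then the minimum of g over [0, P̄] equals min(V·e/h, Q) if p_min ≤ P̄, and equals Q if p_min > P̄. -/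
lemma log_concave_aux (c a b : ℝ) (hc : 0 < c) (ha : 0 < a) (hab : a ≤ b) :
    a * Real.log (1 + c * b) ≤ b * Real.log (1 + c * a) := by
  have hb : 0 < b := lt_of_lt_of_le ha hab
  have hmem1 : (1 + c * b) ∈ Set.Ioi (0:ℝ) := by
    simp only [Set.mem_Ioi]; positivity
  have hmem2 : (1:ℝ) ∈ Set.Ioi (0:ℝ) := by norm_num
  have ht1 : (0:ℝ) ≤ a / b := (div_pos ha hb).le
  have ht2 : (0:ℝ) ≤ 1 - a / b := by
    have : a / b ≤ 1 := (div_le_one hb).mpr hab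
    linarith
  have ht3 : a / b + (1 - a / b) = 1 := by ring
  have hcomb := (strictConcaveOn_log_Ioi.concaveOn).2 hmem1 hmem2 ht1 ht2 ht3
  rw [smul_eq_mul, smul_eq_mul, smul_eq_mul, smul_eq_mul, Real.log_one] at hcomb
  have hxy : a / b * (1 + c * b) + (1 - a / b) * 1 = 1 + c * a := by
    field_simp; ring
  rw [hxy] at hcomb
  have h2 : b * (a / b * Real.log (1 + c * b)) ≤ b * Real.log (1 + c * a) :=
    mul_le_mul_of_nonneg_left (by linarith) hb.le
  calc a * Real.log (1 + c * b) = b * (a / b * Real.log (1 + c * b)) := by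
        field_simp
    _ ≤ b * Real.log (1 + c * a) := h2

/-- Closed-form optimal value of the per-slot problem (used in the proof of
Theorem 1 of the paper): the minimum of the per-slot cost `g` over `[0, P̄]`
equals `min(V·e/h, Q)` if `p_min ≤ P̄`, and equals `Q` otherwise. -/
theorem stmt_19 (L W σ V Q Pbar ξ f τd hgain : ℝ)
    (hL : 0 < L) (hW : 0 < W) (hσ : 0 < σ) (hh : 0 < hgain) (hV : 0 < V)
    (hQ : 0 < Q) (hP : 0 < Pbar) (hξ : 0 ≤ ξ) (hf : 0 < f) (hτ : ξ / f < τd)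
    (D E g : ℝ → ℝ)
    (hD : ∀ p, 0 < p → D p = L / (W * Real.logb 2 (1 + p * hgain / σ)) + ξ / f)
    (hE : ∀ p, 0 < p → E p = L * p / (W * Real.logb 2 (1 + p * hgain / σ)))
    (hg : ∀ p, 0 < p → g p = if D p ≤ τd then V * E p else Q)
    (hg0 : g 0 = Q)
    (pmin e : ℝ)
    (hpmin : pmin = σ / hgain * ((2 : ℝ) ^ (L / (W * (τd - ξ / f))) - 1))
    (he : e = σ * (τd - ξ / f) * ((2 : ℝ) ^ (L / (W * (τd - ξ / f))) - 1)) :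
    IsLeast (g '' Set.Icc (0 : ℝ) Pbar)
      (if pmin ≤ Pbar then min (V * e / hgain) Q else Q) := by
  have hσne := hσ.ne'
  have hhne := hh.ne'
  have hLne := hL.ne'
  have hWne := hW.ne'
  set T : ℝ := τd - ξ / f with hTdef
  have hT : 0 < T := by rw [hTdef]; linarith
  have hTne := hT.ne'
  set α : ℝ := L / (W * T) with hαdef
  have hα : 0 < α := by rw [hαdef]; positivity
  have h2α : (1:ℝ) < 2 ^ α :=
    Real.one_lt_rpow_iff_of_pos (by norm_num) |>.mpr (Or.inl ⟨one_lt_two, hα⟩)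
  have hpminpos : 0 < pmin := by
    rw [hpmin]; exact mul_pos (div_pos hσ hh) (by linarith)
  have hkey : 1 + pmin * hgain / σ = 2 ^ α := by
    rw [hpmin]
    have hc : σ / hgain * ((2:ℝ) ^ α - 1) * hgain / σ = (2:ℝ) ^ α - 1 := by
      field_simp
    rw [hc]; ring
  have hlogbpmin : Real.logb 2 (1 + pmin * hgain / σ) = α := by
    rw [hkey]; exact Real.logb_rpow (by norm_num) (by norm_num)
  have hlogb_pos : ∀ p : ℝ, 0 < p → 0 < Real.logb 2 (1 + p * hgain / σ) := by
    intro p hp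
    have : 0 < p * hgain / σ := by positivity
    exact Real.logb_pos one_lt_two (by linarith)
  -- feasibility iff p ≥ pmin (forward direction)
  have hdir : ∀ p, 0 < p → D p ≤ τd → pmin ≤ p := by
    intro p hp hDp
    rw [hD p hp] at hDp
    have hlpp : 0 < Real.logb 2 (1 + p * hgain / σ) := hlogb_pos p hp
    have h1 : L / (W * Real.logb 2 (1 + p * hgain / σ)) ≤ T := by
      rw [hTdef]; linarith
    have h2 : α ≤ Real.logb 2 (1 + p * hgain / σ) := by
      rw [hαdef, div_le_iff₀ (by positivity)]
      have h1' := (div_le_iff₀ (by positivity : 0 < W * Real.logb 2 (1 + p * hgain / σ))).mp h1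
      nlinarith
    have h3 : (2:ℝ) ^ α ≤ 2 ^ Real.logb 2 (1 + p * hgain / σ) :=
      (Real.rpow_le_rpow_left_iff one_lt_two).mpr h2
    have h4 : (2:ℝ) ^ Real.logb 2 (1 + p * hgain / σ) = 1 + p * hgain / σ :=
      Real.rpow_logb (by norm_num) (by norm_num) (by positivity)
    have h5 : pmin * hgain / σ ≤ p * hgain / σ := by
      linarith [hkey, h3, h4]
    have h6 := mul_le_mul_of_nonneg_right h5 hσ.le
    rw [div_mul_cancel₀ _ hσne, div_mul_cancel₀ _ hσne] at h6
    exact le_of_mul_le_mul_right h6 hh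
  have hDpmin : D pmin ≤ τd := by
    rw [hD pmin hpminpos, hlogbpmin, hαdef]
    have hTT : L / (W * (L / (W * T))) = T := by field_simp
    rw [hTT, hTdef]; linarith
  have hEpmin : E pmin = e / hgain := by
    rw [hE pmin hpminpos, hlogbpmin, hpmin, he, hαdef]
    field_simp
  have hEmono : ∀ p, 0 < p → pmin ≤ p → E pmin ≤ E p := by
    intro p hp hpp
    rw [hE pmin hpminpos, hE p hp, hlogbpmin]
    have hlpp : 0 < Real.logb 2 (1 + p * hgain / σ) := hlogb_pos p hp
    rw [div_le_div_iff₀ (by positivity) (by positivity)]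
    have hc : (0:ℝ) < hgain / σ := by positivity
    have key := log_concave_aux (hgain/σ) pmin p hc hpminpos hpp
    have e1 : 1 + hgain / σ * pmin = 1 + pmin * hgain / σ := by ring
    have e2 : 1 + hgain / σ * p = 1 + p * hgain / σ := by ring
    rw [e1, e2] at key
    have hlog2 : (0:ℝ) < Real.log 2 := Real.log_pos one_lt_two
    have key2 : pmin * Real.logb 2 (1 + p * hgain / σ) ≤ p * α := by
      rw [← hlogbpmin]
      unfold Real.logb
      calc pmin * (Real.log (1 + p * hgain / σ) / Real.log 2)
          = pmin * Real.log (1 + p * hgain / σ) / Real.log 2 := by ring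
        _ ≤ p * Real.log (1 + pmin * hgain / σ) / Real.log 2 :=
            (div_le_div_iff_of_pos_right hlog2).mpr key
        _ = p * (Real.log (1 + pmin * hgain / σ) / Real.log 2) := by ring
    have key3 := mul_le_mul_of_nonneg_left key2 (le_of_lt (mul_pos hL hW))
    calc L * pmin * (W * Real.logb 2 (1 + p * hgain / σ))
        = L * W * (pmin * Real.logb 2 (1 + p * hgain / σ)) := by ring
      _ ≤ L * W * (p * α) := key3
      _ = L * p * (W * α) := by ring
  by_cases hcase : pmin ≤ Pbar
  · rw [if_pos hcase]
    constructor
    · rcases le_total (V * e / hgain) Q with hle | hle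
      · rw [min_eq_left hle]
        refine ⟨pmin, ⟨hpminpos.le, hcase⟩, ?_⟩
        rw [hg pmin hpminpos, if_pos hDpmin, hEpmin]
        ring
      · rw [min_eq_right hle]
        exact ⟨0, ⟨le_refl 0, hP.le⟩, hg0⟩
    · rintro y ⟨p, ⟨hp0, hpP⟩, rfl⟩
      rcases eq_or_lt_of_le hp0 with h0 | hp
      · rw [← h0, hg0]; exact min_le_right _ _
      · rw [hg p hp]
        by_cases hDp : D p ≤ τd
        · rw [if_pos hDp]
          have hmono := hEmono p hp (hdir p hp hDp)
          calc min (V * e / hgain) Q ≤ V * e / hgain := min_le_left _ _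
            _ = V * E pmin := by rw [hEpmin]; ring
            _ ≤ V * E p := mul_le_mul_of_nonneg_left hmono hV.le
        · rw [if_neg hDp]; exact min_le_right _ _
  · rw [if_neg hcase]
    push_neg at hcase
    constructor
    · exact ⟨0, ⟨le_refl 0, hP.le⟩, hg0⟩
    · rintro y ⟨p, ⟨hp0, hpP⟩, rfl⟩
      rcases eq_or_lt_of_le hp0 with h0 | hp
      · rw [← h0, hg0]
      · rw [hg p hp]
        have hDp : ¬ D p ≤ τd := fun h => absurd (hdir p hp h) (by linarith)
        rw [if_neg hDp]
end
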